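/- Let G be a directed graph and let G' be the directed graph obtained from G by adding, for each vertex u, a fresh vertex u₂ and an arc (u₁,u₂). Then for every vertex v of G, the normal-play outcome of Edge Geography on (G,v) equals the misère-play outcome of Edge Geography on (G',v₁). -/
import Mathlib


universe u
mutual
  inductive GNormalWin {α : Type u} (moves : α → α → Prop) : α → Prop
    | step {p q : α} : moves p q → GNormalLose moves q → GNormalWin moves p
  inductive GNormalLose {α : Type u} (moves : α → α → Prop) : α → Prop
    | intro {p : α} : (∀ q, moves p q → GNormalWin moves q) → GNormalLose moves p
end

mutual
  inductive GMisereWin {α : Type u} (moves : α → α → Prop) : α → Prop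
    | terminal {p : α} : (∀ q, ¬ moves p q) → GMisereWin moves p
    | step {p q : α} : moves p q → GMisereLose moves q → GMisereWin moves p
  inductive GMisereLose {α : Type u} (moves : α → α → Prop) : α → Prop
    | intro {p q₀ : α} : moves p q₀ → (∀ q, moves p q → GMisereWin moves q) → GMisereLose moves p
end

def nimMove {V : Type u} (adj : V → V → Prop) (p q : V × (V → ℕ)) : Prop :=
  adj p.1 q.1 ∧ q.2 p.1 < p.2 p.1 ∧ ∀ v, v ≠ p.1 → q.2 v = p.2 v

mutual
  inductive NimRMWin {V : Type u} (adj : V → V → Prop) : V × (V → ℕ) → Prop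
    | zero {p} : p.2 p.1 = 0 → NimRMWin adj p
    | step {p q} : nimMove adj p q → NimRMLose adj q → NimRMWin adj p
  inductive NimRMLose {V : Type u} (adj : V → V → Prop) : V × (V → ℕ) → Prop
    | intro {p} : p.2 p.1 ≠ 0 → (∀ q, nimMove adj p q → NimRMWin adj q) → NimRMLose adj p
end

def vgMove {V : Type u} (A : V → V → Prop) (p q : Set V × V) : Prop :=
  A p.2 q.2 ∧ q.2 ∈ p.1 ∧ q.2 ≠ p.2 ∧ q.1 = p.1 \ {p.2}

def addOut {V : Type u} (A : V → V → Prop) : V ⊕ V → V ⊕ V → Prop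
  | .inl a, .inl b => A a b
  | .inl a, .inr b => a = b
  | _, _ => False

def MaxMatching {V : Type u} (G : SimpleGraph V) (M : G.Subgraph) : Prop :=
  M.IsMatching ∧ ∀ N : G.Subgraph, N.IsMatching → N.edgeSet.ncard ≤ M.edgeSet.ncard

def egMoveU {V : Type u} (p q : Set (Sym2 V) × V) : Prop :=
  s(p.2, q.2) ∈ p.1 ∧ q.1 = p.1 \ {s(p.2, q.2)}

def egMoveD {V : Type u} (p q : Set (V × V) × V) : Prop :=
  (p.2, q.2) ∈ p.1 ∧ q.1 = p.1 \ {(p.2, q.2)}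


namespace EGAux

variable {V : Type}

def F (E : Set (V × V)) : Set ((V ⊕ V) × (V ⊕ V)) :=
  {p | ∃ x y, (x, y) ∈ E ∧ p = (Sum.inl x, Sum.inl y)} ∪ {p | ∃ x, p = (Sum.inl x, Sum.inr x)}

lemma memF_inl {E : Set (V × V)} {a b : V} :
    (Sum.inl a, Sum.inl b) ∈ F E ↔ (a, b) ∈ E := by
  simp [F]

lemma memF_pend {E : Set (V × V)} {a c : V} :
    (Sum.inl a, Sum.inr c) ∈ F E ↔ c = a := by
  simp [F, eq_comm]

lemma noF_inr {E : Set (V × V)} {a : V} {q : V ⊕ V} : (Sum.inr a, q) ∉ F E := by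
  simp [F]

lemma F_diff {E : Set (V × V)} {a b : V} :
    F E \ {(Sum.inl a, Sum.inl b)} = F (E \ {(a, b)}) := by
  ext ⟨x | x, y | y⟩ <;> simp [F]

lemma main [Fintype V] :
    ∀ (n : ℕ) (E : Set (V × V)) (a : V), E.ncard < n →
      (GNormalWin egMoveD (E, a) ↔ GMisereWin egMoveD (F E, Sum.inl a)) ∧
      (GNormalLose egMoveD (E, a) ↔ GMisereLose egMoveD (F E, Sum.inl a)) := by
  intro n
  induction n with
  | zero => omega
  | succ n ih =>
    intro E a hn
    have hlt : ∀ b : V, (a, b) ∈ E → (E \ {(a, b)}).ncard < n := by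
      intro b hb
      have := Set.ncard_diff_singleton_lt_of_mem hb E.toFinite
      omega
    constructor
    · constructor
      · rintro @⟨_, ⟨S, b⟩, ⟨hmem, hS⟩, hl⟩
        dsimp at hmem hS
        subst hS
        exact GMisereWin.step (q := (F (E \ {(a, b)}), Sum.inl b))
          ⟨memF_inl.mpr hmem, F_diff.symm⟩ (((ih _ b (hlt b hmem)).2).mp hl)
      · rintro (⟨hterm⟩ | @⟨_, ⟨S, c⟩, ⟨hmem, hS⟩, hl⟩)
        · exact absurd ⟨memF_pend.mpr rfl, rfl⟩
            (hterm (F E \ {(Sum.inl a, Sum.inr a)}, Sum.inr a))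
        · dsimp at hmem hS
          subst hS
          match c with
          | Sum.inl b =>
            rw [F_diff] at hl
            exact GNormalWin.step (q := (E \ {(a, b)}, b)) ⟨memF_inl.mp hmem, rfl⟩
              (((ih _ b (hlt b (memF_inl.mp hmem))).2).mpr hl)
          | Sum.inr x =>
            rcases hl with @⟨_, ⟨S', d⟩, ⟨hmem', _⟩, _⟩
            exact absurd hmem'.1 (fun h => noF_inr h)
    · constructor
      · rintro ⟨h⟩
        refine GMisereLose.intro (q₀ := (F E \ {(Sum.inl a, Sum.inr a)}, Sum.inr a))
          ⟨memF_pend.mpr rfl, rfl⟩ ?_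
        rintro ⟨S, c⟩ ⟨hmem, hS⟩
        dsimp at hmem hS
        subst hS
        match c with
        | Sum.inl b =>
          have hb : (a, b) ∈ E := memF_inl.mp hmem
          rw [F_diff]
          exact ((ih _ b (hlt b hb)).1).mp (h (E \ {(a, b)}, b) ⟨hb, rfl⟩)
        | Sum.inr x =>
          exact GMisereWin.terminal (fun q hq => noF_inr hq.1.1)
      · rintro ⟨hq₀, h⟩
        refine GNormalLose.intro ?_
        rintro ⟨S, b⟩ ⟨hmem, hS⟩
        dsimp at hmem hS
        subst hS
        have := h (F (E \ {(a, b)}), Sum.inl b) ⟨memF_inl.mpr hmem, F_diff.symm⟩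
        exact ((ih _ b (hlt b hmem)).1).mpr this

end EGAux

/-- Directed Edge Geography: the normal outcome of `(G,v)` equals the misère outcome of
`(G',v₁)` where `G'` gives every vertex a fresh out-neighbour. -/
theorem stmt4 {V : Type} [Fintype V] (A : V → V → Prop) (v : V) :
    GNormalWin egMoveD ({p : V × V | A p.1 p.2}, v) ↔
      GMisereWin egMoveD ({p : (V ⊕ V) × (V ⊕ V) | addOut A p.1 p.2}, Sum.inl v) := by
  have hF : {p : (V ⊕ V) × (V ⊕ V) | addOut A p.1 p.2} = EGAux.F {p : V × V | A p.1 p.2} := by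
    ext ⟨x | x, y | y⟩ <;> simp [EGAux.F, addOut, eq_comm]
  rw [hF]
  exact (EGAux.main ({p : V × V | A p.1 p.2}.ncard + 1) _ v (by omega)).1
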